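/- Let r ∈ ℕ with r ≥ 1, b := 1/(2r), n := r + 1, and positions x_j := (j−1)/(n−1) for j = 1,…,n. Let m_1,…,m_n > 0 with Σ_j m_j = 1 and μ := Σ_{j=1}^{n} m_j·δ_{x_j}. Define the marginal information density i(x; μ) := −r·∫_{x−b}^{x+b} log(2b·p_Y(y; μ)) dy where p_Y(y; μ) := r·μ([y−b, y+b] ∩ [0,1]). Then for every j ∈ {1,…,n−1} and every x ∈ [x_j, x_{j+1}]: i(x; μ) = −log m_j + r·log(m_j/m_{j+1})·(x − x_j). In particular, i(·; μ) is affine on each interval [x_j, x_{j+1}] with slope r·log(m_j/m_{j+1}). -/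

import Mathlib

open MeasureTheory Set

/-- Output density of the additive uniform noise channel:
`p_Y(y; μ) = r · μ([y−b, y+b] ∩ [0,1])`. -/
noncomputable def outDen (r b : ℝ) (μ : Measure ℝ) (y : ℝ) : ℝ :=
  r * (μ (Icc (y - b) (y + b) ∩ Icc 0 1)).toReal

/-- Marginal information density of the additive uniform noise channel:
`i(x; μ) = −r · ∫_{x−b}^{x+b} log(2b · p_Y(y; μ)) dy`. -/
noncomputable def margInfo (r b : ℝ) (μ : Measure ℝ) (x : ℝ) : ℝ :=
  -r * ∫ y in (x - b)..(x + b), Real.log (2 * b * outDen r b μ y)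

/-- Integer case: with positions `x_j = (j−1)/(n−1)` and positive
masses `m_j` summing to 1, the marginal information density is affine on each
`[x_j, x_{j+1}]`: `i(x) = −log m_j + r·log(m_j/m_{j+1})·(x − x_j)`. -/
theorem stmt5 (r : ℕ) (hr : 1 ≤ r) (b : ℝ) (hb : b = 1 / (2 * (r : ℝ)))
    (n : ℕ) (hn : n = r + 1)
    (x : ℕ → ℝ) (hx : ∀ j, x j = ((j : ℝ) - 1) / ((n : ℝ) - 1))
    (m : ℕ → ℝ) (hm : ∀ j ∈ Finset.Icc 1 n, 0 < m j)
    (hsum : ∑ j ∈ Finset.Icc 1 n, m j = 1)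
    (μ : Measure ℝ)
    (hμ : μ = ∑ j ∈ Finset.Icc 1 n, ENNReal.ofReal (m j) • Measure.dirac (x j)) :
    ∀ j ∈ Finset.Icc 1 (n - 1), ∀ z ∈ Icc (x j) (x (j + 1)),
      margInfo (r : ℝ) b μ z
        = -Real.log (m j) + (r : ℝ) * Real.log (m j / m (j + 1)) * (z - x j) := by
  intro j hj z hz
  simp only [Finset.mem_Icc] at hj
  have hr0 : (0:ℝ) < r := by exact_mod_cast Nat.lt_of_lt_of_le Nat.zero_lt_one hr
  have hb0 : 0 < b := by rw [hb]; positivity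
  have h2br : 2 * b * r = 1 := by rw [hb]; field_simp
  have hn' : ((n:ℝ) - 1) = r := by rw [hn]; push_cast; ring
  have hxk : ∀ k : ℕ, x k = ((k:ℝ) - 1) / r := by intro k; rw [hx, hn']
  have h2b : 2 * b = 1 / r := by
    field_simp at h2br ⊢; linarith
  have hgap : ∀ k : ℕ, x (k + 1) = x k + 2 * b := by
    intro k
    rw [hxk, hxk, h2b]
    push_cast
    field_simp
    ring
  -- membership indices
  have hjmem : j ∈ Finset.Icc 1 n := by
    simp only [Finset.mem_Icc]; omega
  have hj1mem : j + 1 ∈ Finset.Icc 1 n := by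
    simp only [Finset.mem_Icc]; omega
  have hmj : 0 < m j := hm j hjmem
  have hmj1 : 0 < m (j + 1) := hm (j + 1) hj1mem
  -- Key: on the open block around x k, 2b · outDen = m k
  have key : ∀ k ∈ Finset.Icc 1 n, ∀ y ∈ Ioo (x k - b) (x k + b),
      2 * b * outDen (r:ℝ) b μ y = m k := by
    intro k hk y hy
    simp only [Finset.mem_Icc] at hk
    have hS : MeasurableSet (Icc (y - b) (y + b) ∩ Icc (0:ℝ) 1) :=
      measurableSet_Icc.inter measurableSet_Icc
    have hmem : ∀ l, 1 ≤ l → l ≤ n →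
        (x l ∈ Icc (y - b) (y + b) ∩ Icc (0:ℝ) 1 ↔ l = k) := by
      intro l hl1 hl2
      constructor
      · rintro ⟨⟨h1, h2⟩, _⟩
        by_contra hlk
        have hlkZ : ((l:ℤ) - (k:ℤ)) ≠ 0 := by
          intro h; apply hlk; omega
        have h1' : (1:ℝ) ≤ |(l:ℝ) - (k:ℝ)| := by
          have := Int.one_le_abs hlkZ
          have h2' : (1:ℝ) ≤ |((l:ℤ) - (k:ℤ) : ℤ)| := by exact_mod_cast this
          rw [Int.cast_abs] at h2'
          push_cast at h2'
          exact h2'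
        have hd : x l - x k = ((l:ℝ) - k) / r := by
          rw [hxk, hxk]; ring
        have habs : |x l - x k| < 2 * b := by
          rw [abs_sub_lt_iff]
          constructor
          · linarith [hy.1, hy.2]
          · linarith [hy.1, hy.2]
        rw [hd, abs_div, abs_of_pos hr0, h2b, div_lt_div_iff₀ hr0 hr0] at habs
        nlinarith
      · rintro rfl
        refine ⟨⟨by linarith [hy.2], by linarith [hy.1]⟩, ?_, ?_⟩
        · rw [hxk]
          apply div_nonneg _ hr0.le
          have : (1:ℝ) ≤ (l:ℝ) := by exact_mod_cast hl1
          linarith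
        · rw [hxk, div_le_one hr0]
          have : (l:ℝ) ≤ (n:ℝ) := by exact_mod_cast hl2
          rw [hn] at this
          push_cast at this
          linarith
    have hμS : μ (Icc (y - b) (y + b) ∩ Icc 0 1) = ENNReal.ofReal (m k) := by
      rw [hμ, Measure.finset_sum_apply]
      rw [Finset.sum_eq_single_of_mem k (by simp only [Finset.mem_Icc]; omega)]
      · rw [Measure.smul_apply, Measure.dirac_apply' _ hS,
          Set.indicator_of_mem ((hmem k hk.1 hk.2).mpr rfl)]
        simp
      · intro l hl hne
        simp only [Finset.mem_Icc] at hl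
        rw [Measure.smul_apply, Measure.dirac_apply' _ hS,
          Set.indicator_of_notMem]
        · simp
        · intro hmem'; exact hne ((hmem l hl.1 hl.2).mp hmem')
    rw [outDen, hμS, ENNReal.toReal_ofReal (hm k (by simp only [Finset.mem_Icc]; exact hk)).le]
    calc 2 * b * ((r:ℝ) * m k) = (2 * b * r) * m k := by ring
    _ = m k := by rw [h2br]; ring
  -- setup for the integral split
  set c : ℝ := x j + b with hc
  have hzx1 : x j ≤ z := hz.1
  have hzx2 : z ≤ x (j + 1) := hz.2
  have hxj1 : x (j + 1) = x j + 2 * b := hgap j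
  have hac1 : z - b ≤ c := by rw [hc]; linarith [hxj1 ▸ hzx2]
  have hac2 : c ≤ z + b := by rw [hc]; linarith
  -- a.e. statements
  have hae1 : ∀ᵐ y : ℝ, y ∈ Set.uIoc (z - b) c →
      Real.log (2 * b * outDen (r:ℝ) b μ y) = Real.log (m j) := by
    have hne : ∀ᵐ y : ℝ, y ≠ c := by
      rw [ae_iff]
      simp only [ne_eq, not_not, setOf_eq_eq_singleton]
      exact measure_singleton c
    filter_upwards [hne] with y hyne hyI
    rw [Set.uIoc_of_le hac1] at hyI
    have hyO : y ∈ Ioo (x j - b) (x j + b) :=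
      ⟨by linarith [hyI.1], lt_of_le_of_ne (hc ▸ hyI.2) hyne⟩
    rw [key j hjmem y hyO]
  have hae2 : ∀ᵐ y : ℝ, y ∈ Set.uIoc c (z + b) →
      Real.log (2 * b * outDen (r:ℝ) b μ y) = Real.log (m (j + 1)) := by
    have hne : ∀ᵐ y : ℝ, y ≠ x (j + 1) + b := by
      rw [ae_iff]
      simp only [ne_eq, not_not, setOf_eq_eq_singleton]
      exact measure_singleton _
    filter_upwards [hne] with y hyne hyI
    rw [Set.uIoc_of_le hac2] at hyI
    have hyO : y ∈ Ioo (x (j + 1) - b) (x (j + 1) + b) := by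
      constructor
      · have : x (j + 1) - b = c := by rw [hxj1, hc]; ring
        rw [this]; exact hyI.1
      · exact lt_of_le_of_ne (by linarith [hyI.2, hxj1 ▸ hzx2]) hyne
    rw [key (j + 1) hj1mem y hyO]
  -- integrability of the two pieces
  have hii : ∀ (a₁ a₂ : ℝ) (C : ℝ), a₁ ≤ a₂ →
      (∀ᵐ y : ℝ, y ∈ Set.uIoc a₁ a₂ → Real.log (2 * b * outDen (r:ℝ) b μ y) = Real.log C) →
      IntervalIntegrable (fun y => Real.log (2 * b * outDen (r:ℝ) b μ y)) volume a₁ a₂ := by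
    intro a₁ a₂ C h12 hae
    rw [intervalIntegrable_iff_integrableOn_Ioc_of_le h12]
    have hconst : IntegrableOn (fun _ : ℝ => Real.log C) (Ioc a₁ a₂) volume :=
      (integrableOn_const_iff enorm_ne_top).mpr (Or.inr measure_Ioc_lt_top)
    apply hconst.congr
    rw [Filter.EventuallyEq, ae_restrict_iff' measurableSet_Ioc]
    filter_upwards [hae] with y hy hyI
    rw [hy (by rwa [Set.uIoc_of_le h12])]
  have hii1 := hii (z - b) c (m j) hac1 hae1
  have hii2 := hii c (z + b) (m (j + 1)) hac2 hae2
  -- compute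
  have hsplit := intervalIntegral.integral_add_adjacent_intervals hii1 hii2
  have hI1 : ∫ y in (z - b)..c, Real.log (2 * b * outDen (r:ℝ) b μ y)
      = (c - (z - b)) * Real.log (m j) := by
    rw [intervalIntegral.integral_congr_ae hae1, intervalIntegral.integral_const,
      smul_eq_mul]
  have hI2 : ∫ y in c..(z + b), Real.log (2 * b * outDen (r:ℝ) b μ y)
      = (z + b - c) * Real.log (m (j + 1)) := by
    rw [intervalIntegral.integral_congr_ae hae2, intervalIntegral.integral_const,
      smul_eq_mul]
  rw [margInfo, ← hsplit, hI1, hI2, Real.log_div hmj.ne' hmj1.ne']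
  rw [hc]
  have h1 : x j + b - (z - b) = 2 * b - (z - x j) := by ring
  rw [h1]
  linear_combination (-Real.log (m j)) * h2br
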